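/- Fix ε, Δτ, C, q₀ ∈ ℝ and n ∈ ℕ, and let T̂ₙ : ℝ² → ℝ² be the single time-step map T̂ₙ(p,q) = (p − εΔτ·tan Θ, q + pΔτ − (ε(Δτ)²/2)·tan Θ) with Θ = π(2q + Δτ·p − q₀ − CΔτ(n + 1/2)). Let R(p,q) = (−p, q). Then for every (p,q) ∈ ℝ² with cos Θ ≠ 0, one has (R ∘ T̂ₙ)((R ∘ T̂ₙ)(p,q)) = (p,q); i.e., R ∘ T̂ₙ = T̂ₙ⁻¹ ∘ R at (p,q), so the map T̂_{ε,Δτ} has time reversal symmetry. -/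
import Mathlib


/-- The single time-step map `T̂ₙ : ℝ² → ℝ²` of the lifted `T̂_{ε,Δτ}` recursion. -/
noncomputable def ThatStep (ε Δτ C q₀ : ℝ) (n : ℕ) : ℝ × ℝ → ℝ × ℝ :=
  fun x =>
    let Θ := Real.pi * (2 * x.2 + Δτ * x.1 - q₀ - C * Δτ * ((n : ℝ) + 1 / 2))
    (x.1 - ε * Δτ * Real.tan Θ,
     x.2 + x.1 * Δτ - (ε * Δτ ^ 2 / 2) * Real.tan Θ)

/-- The momentum-reversal operator `R(p,q) = (−p,q)` on `ℝ²`. -/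
def momentumReversal2 : ℝ × ℝ → ℝ × ℝ := fun x => (-x.1, x.2)

/-- Time reversal symmetry of `T̂_{ε,Δτ}`: `(R ∘ T̂ₙ) ∘ (R ∘ T̂ₙ) = id` at every
point where the tangent is regular. -/
theorem That_time_reversal (ε Δτ C q₀ : ℝ) (n : ℕ) (p q : ℝ)
    (h : Real.cos (Real.pi * (2 * q + Δτ * p - q₀ - C * Δτ * ((n : ℝ) + 1 / 2))) ≠ 0) :
    (momentumReversal2 ∘ ThatStep ε Δτ C q₀ n)
      ((momentumReversal2 ∘ ThatStep ε Δτ C q₀ n) (p, q)) = (p, q) := by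
  simp only [Function.comp, ThatStep, momentumReversal2]
  have hΘ : Real.pi * (2 * (q + p * Δτ - ε * Δτ ^ 2 / 2 *
        Real.tan (Real.pi * (2 * q + Δτ * p - q₀ - C * Δτ * ((n : ℝ) + 1 / 2)))) +
      Δτ * -(p - ε * Δτ *
        Real.tan (Real.pi * (2 * q + Δτ * p - q₀ - C * Δτ * ((n : ℝ) + 1 / 2)))) -
      q₀ - C * Δτ * ((n : ℝ) + 1 / 2)) =
      Real.pi * (2 * q + Δτ * p - q₀ - C * Δτ * ((n : ℝ) + 1 / 2)) := by ring
  rw [hΘ]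
  exact Prod.ext (by ring) (by ring)
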